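/- Let k be a commutative ring and V a free k-module of finite rank r. Suppose φ is a k-linear endomorphism of ⋀V homogeneous of degree −n with n ≥ 0, and δ is a k-linear superderivation of ⋀V homogeneous of degree j with −n + j ≤ 0. Then Tr_Λ([δ,φ]_s) = [δ, Tr_Λ(φ)]_s; precisely, i(Tr_Λ([δ,φ]_s)) = [δ, i(Tr_Λ(φ))]_s as k-linear endomorphisms of ⋀V. -/

import Mathlib

open ExteriorAlgebra

variable (k : Type*) [CommRing k] (V : Type*) [AddCommGroup V] [Module k V]

-- the grading involution ε : +1 on even part, −1 on odd part
noncomputable def eps : ExteriorAlgebra k V →ₐ[k] ExteriorAlgebra k V :=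
  ExteriorAlgebra.lift k ⟨-(ExteriorAlgebra.ι k (M := V)), fun m => by
    simp [ExteriorAlgebra.ι_sq_zero]⟩

-- the supertrace
noncomputable def strs (φ : Module.End k (ExteriorAlgebra k V)) : k :=
  LinearMap.trace k _ ((eps k V).toLinearMap ∘ₗ φ)

-- projection onto the degree-n graded component
noncomputable def pr (n : ℕ) : ExteriorAlgebra k V →ₗ[k] ⋀[k]^n V :=
  (DirectSum.component k ℕ (fun i => (⋀[k]^i V : Submodule k (ExteriorAlgebra k V))) n) ∘ₗ
    (DirectSum.decomposeLinearEquiv (fun i : ℕ => (⋀[k]^i V : Submodule k (ExteriorAlgebra k V)))).toLinearMap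

noncomputable def prEnd (n : ℕ) : Module.End k (ExteriorAlgebra k V) :=
  (Submodule.subtype _) ∘ₗ pr k V n

-- the degree-d homogeneous component of an endomorphism
noncomputable def cpt (d : ℤ) (φ : Module.End k (ExteriorAlgebra k V)) :
    Module.End k (ExteriorAlgebra k V) :=
  ∑ m ∈ Finset.range (Module.finrank k V + 1),
    if 0 ≤ (m : ℤ) + d then prEnd k V ((m : ℤ) + d).toNat ∘ₗ φ ∘ₗ prEnd k V m else 0

-- generalized supertrace of a degree-(−n) homogeneous endomorphism
noncomputable def TrHom (n : ℕ) (φ : Module.End k (ExteriorAlgebra k V)) :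
    Module.Dual k (⋀[k]^n V) where
  toFun η := (-1 : k) ^ n * strs k V ((LinearMap.mulLeft k (η : ExteriorAlgebra k V)) ∘ₗ φ)
  map_add' x y := by
    have h : ∀ a b : ExteriorAlgebra k V, LinearMap.mulLeft k (a + b) =
        LinearMap.mulLeft k a + LinearMap.mulLeft k b := fun a b => by
      ext z; simp [add_mul]
    simp [h, strs, LinearMap.comp_add, LinearMap.add_comp, mul_add]
  map_smul' c x := by
    have h : ∀ (c : k) (a : ExteriorAlgebra k V), LinearMap.mulLeft k (c • a) =
        c • LinearMap.mulLeft k a := fun c a => by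
      ext z; simp [smul_mul_assoc]
    simp [h, strs, LinearMap.comp_smul, LinearMap.smul_comp]
    ring

-- generalized supertrace of an arbitrary endomorphism, at level n
noncomputable def TrGen (n : ℕ) (φ : Module.End k (ExteriorAlgebra k V)) :
    Module.Dual k (⋀[k]^n V) :=
  TrHom k V n (cpt k V (-(n : ℤ)) φ)

-- the embedding i : ⋀ V^∨ → End(⋀ V)
noncomputable def iEmb (n : ℕ) (α : Module.Dual k (⋀[k]^n V)) :
    Module.End k (ExteriorAlgebra k V) :=
  (Algebra.linearMap k (ExteriorAlgebra k V)) ∘ₗ α ∘ₗ pr k V n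

-- i ∘ Tr_Λ as a single endomorphism, and its even/odd parts
noncomputable def iTr (φ : Module.End k (ExteriorAlgebra k V)) :
    Module.End k (ExteriorAlgebra k V) :=
  ∑ n ∈ Finset.range (Module.finrank k V + 1), iEmb k V n (TrGen k V n φ)

noncomputable def iTrEven (φ : Module.End k (ExteriorAlgebra k V)) :
    Module.End k (ExteriorAlgebra k V) :=
  ∑ n ∈ Finset.range (Module.finrank k V + 1),
    if Even n then iEmb k V n (TrGen k V n φ) else 0

noncomputable def iTrOdd (φ : Module.End k (ExteriorAlgebra k V)) :
    Module.End k (ExteriorAlgebra k V) :=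
  ∑ n ∈ Finset.range (Module.finrank k V + 1),
    if ¬ Even n then iEmb k V n (TrGen k V n φ) else 0

-- parity submodules
noncomputable def evenSub : Submodule k (ExteriorAlgebra k V) :=
  ⨆ n : ℕ, ⋀[k]^(2 * n) V

noncomputable def oddSub : Submodule k (ExteriorAlgebra k V) :=
  ⨆ n : ℕ, ⋀[k]^(2 * n + 1) V

def IsEvenMap (f : Module.End k (ExteriorAlgebra k V)) : Prop :=
  (∀ x ∈ evenSub k V, f x ∈ evenSub k V) ∧ (∀ x ∈ oddSub k V, f x ∈ oddSub k V)

def IsOddMap (f : Module.End k (ExteriorAlgebra k V)) : Prop :=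
  (∀ x ∈ evenSub k V, f x ∈ oddSub k V) ∧ (∀ x ∈ oddSub k V, f x ∈ evenSub k V)

def IsEvenDeriv (δ : Module.End k (ExteriorAlgebra k V)) : Prop :=
  IsEvenMap k V δ ∧ ∀ x y : ExteriorAlgebra k V, δ (x * y) = δ x * y + x * δ y

def IsOddDeriv (δ : Module.End k (ExteriorAlgebra k V)) : Prop :=
  IsOddMap k V δ ∧
  (∀ x ∈ evenSub k V, ∀ y : ExteriorAlgebra k V, δ (x * y) = δ x * y + x * δ y) ∧
  (∀ x ∈ oddSub k V, ∀ y : ExteriorAlgebra k V, δ (x * y) = δ x * y - x * δ y)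

-- supercommutator of parity-decomposed endomorphisms, [a₀+a₁, b₀+b₁]ₛ
def sComm (a₀ a₁ b₀ b₁ : Module.End k (ExteriorAlgebra k V)) :
    Module.End k (ExteriorAlgebra k V) :=
  (a₀ * b₀ - b₀ * a₀) + (a₀ * b₁ - b₁ * a₀) + (a₁ * b₀ - b₀ * a₁) + (a₁ * b₁ + b₁ * a₁)

def IsHomogeneousOfDegree (d : ℤ) (φ : Module.End k (ExteriorAlgebra k V)) : Prop :=
  ∀ m : ℕ, ∀ x ∈ ⋀[k]^m V,
    (∀ m' : ℕ, (m' : ℤ) = (m : ℤ) + d → φ x ∈ ⋀[k]^m' V) ∧ ((m : ℤ) + d < 0 → φ x = 0)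

/-!
A superderivation kills `1`, hence `δ ∘ i α = 0` since `i α` takes scalar values, so only
`i (Tr_Λ φ) ∘ δ` survives on the right. Both sides vanish off degree `n - j`. On `x` of degree
`n - j`, the Leibniz rule says `l_{δx} = [δ, l_x]ₛ`, and the supertrace vanishes on
supercommutators with the homogeneous `δ` (because `ε δ = (-1)^j δ ε` and the trace is cyclic);
what remains is sign bookkeeping.
-/

section

variable {k V} {j : ℤ} {δ : Module.End k (ExteriorAlgebra k V)}

lemma eps_apply_of_mem {m : ℕ} {x : ExteriorAlgebra k V} (hx : x ∈ ⋀[k]^m V) :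
    eps k V x = (m : ℤ).negOnePow • x := by
  rw [exteriorPower] at hx
  induction hx using Submodule.pow_induction_on_left' with
  | algebraMap r => simp
  | add x y i _ _ ihx ihy => rw [map_add, ihx, ihy, smul_add]
  | mem_mul a ha i y _ ih =>
    obtain ⟨v, rfl⟩ := ha
    rw [map_mul, ih, eps, ExteriorAlgebra.lift_ι_apply, Nat.cast_succ, Int.negOnePow_succ,
      Units.neg_smul, mul_smul_comm]
    simp

lemma linearMap_ext_of_exteriorPower {f g : Module.End k (ExteriorAlgebra k V)}
    (h : ∀ m : ℕ, ∀ x ∈ ⋀[k]^m V, f x = g x) : f = g := by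
  refine LinearMap.ext fun x => ?_
  induction x using DirectSum.Decomposition.inductionOn fun i => ⋀[k]^i V with
  | zero => simp
  | add a b ha hb => rw [map_add, map_add, ha, hb]
  | homogeneous hm =>
    obtain ⟨y, hy⟩ := hm
    exact h _ y hy

lemma pr_apply_of_mem {m : ℕ} {x : ExteriorAlgebra k V} (hx : x ∈ ⋀[k]^m V) :
    pr k V m x = ⟨x, hx⟩ :=
  Subtype.ext <| by
    simpa [pr, ← DirectSum.apply_eq_component, DirectSum.decomposeLinearEquiv_apply] using
      DirectSum.decompose_of_mem_same (fun i => ⋀[k]^i V) hx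

lemma pr_apply_of_mem_of_ne {m p : ℕ} {x : ExteriorAlgebra k V} (hx : x ∈ ⋀[k]^m V)
    (h : m ≠ p) : pr k V p x = 0 :=
  Subtype.ext <| by
    simpa [pr, ← DirectSum.apply_eq_component, DirectSum.decomposeLinearEquiv_apply] using
      DirectSum.decompose_of_mem_ne (fun i => ⋀[k]^i V) hx h

lemma pr_map_of_isHomogeneousOfDegree_of_ne {d : ℤ} {f : Module.End k (ExteriorAlgebra k V)}
    (hf : IsHomogeneousOfDegree k V d f) {m p : ℕ} {x : ExteriorAlgebra k V}
    (hx : x ∈ ⋀[k]^m V) (h : (m : ℤ) + d ≠ p) : pr k V p (f x) = 0 := by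
  by_cases hneg : (m : ℤ) + d < 0
  · rw [(hf m x hx).2 hneg, map_zero]
  · exact pr_apply_of_mem_of_ne ((hf m x hx).1 _ (Int.toNat_of_nonneg (by omega))) (by omega)

lemma eps_comp_of_isHomogeneousOfDegree {d : ℤ} {f : Module.End k (ExteriorAlgebra k V)}
    (hf : IsHomogeneousOfDegree k V d f) :
    (eps k V).toLinearMap ∘ₗ f = d.negOnePow • (f ∘ₗ (eps k V).toLinearMap) := by
  refine linearMap_ext_of_exteriorPower fun m x hx => ?_
  simp only [LinearMap.comp_apply, LinearMap.smul_apply, AlgHom.toLinearMap_apply,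
    eps_apply_of_mem hx, LinearMap.map_smul_of_tower, smul_smul, ← Int.negOnePow_add]
  by_cases hd : 0 ≤ (m : ℤ) + d
  · have hfx := (hf m x hx).1 ((m : ℤ) + d).toNat (Int.toNat_of_nonneg hd)
    rw [eps_apply_of_mem hfx, Int.toNat_of_nonneg hd, add_comm]
  · simp [(hf m x hx).2 (by omega)]

lemma mem_evenSub_of_mem {m : ℕ} (hm : Even m) {x : ExteriorAlgebra k V} (hx : x ∈ ⋀[k]^m V) :
    x ∈ evenSub k V := by
  obtain ⟨t, rfl⟩ := hm
  exact Submodule.mem_iSup_of_mem t (by rwa [two_mul])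

lemma mem_oddSub_of_mem {m : ℕ} (hm : Odd m) {x : ExteriorAlgebra k V} (hx : x ∈ ⋀[k]^m V) :
    x ∈ oddSub k V := by
  obtain ⟨t, rfl⟩ := hm
  exact Submodule.mem_iSup_of_mem t hx

lemma map_mul_of_superderivation (hδe : Even j → IsEvenDeriv k V δ)
    (hδo : Odd j → IsOddDeriv k V δ) {m : ℕ} {x : ExteriorAlgebra k V} (hx : x ∈ ⋀[k]^m V)
    (y : ExteriorAlgebra k V) : δ (x * y) = δ x * y + (j * m).negOnePow • (x * δ y) := by
  rcases Int.even_or_odd j with hj | hj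
  · rw [Int.negOnePow_even _ (hj.mul_right _), one_smul, (hδe hj).2]
  rcases Nat.even_or_odd m with hm | hm
  · rw [Int.negOnePow_even _ ((Int.even_coe_nat m).mpr hm |>.mul_left _), one_smul,
      (hδo hj).2.1 x (mem_evenSub_of_mem hm hx)]
  · rw [Int.negOnePow_odd _ (hj.mul ((Int.odd_coe_nat m).mpr hm)), Units.neg_smul, one_smul,
      (hδo hj).2.2 x (mem_oddSub_of_mem hm hx), sub_eq_add_neg]

lemma map_one_of_superderivation (hδe : Even j → IsEvenDeriv k V δ)
    (hδo : Odd j → IsOddDeriv k V δ) : δ 1 = 0 := by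
  simpa using map_mul_of_superderivation hδe hδo (SetLike.GradedOne.one_mem (A := (⋀[k]^· V))) 1

lemma mulLeft_map_of_superderivation (hδe : Even j → IsEvenDeriv k V δ)
    (hδo : Odd j → IsOddDeriv k V δ) {m : ℕ} {x : ExteriorAlgebra k V} (hx : x ∈ ⋀[k]^m V) :
    LinearMap.mulLeft k (δ x) =
      δ ∘ₗ LinearMap.mulLeft k x - (j * m).negOnePow • (LinearMap.mulLeft k x ∘ₗ δ) := by
  ext y
  simp [map_mul_of_superderivation hδe hδo hx]

lemma comp_iEmb_eq_zero (hδ : δ 1 = 0) (n : ℕ) (α : Module.Dual k (⋀[k]^n V)) : δ ∘ₗ iEmb k V n α = 0 := by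
  ext x
  simp [iEmb, Algebra.algebraMap_eq_smul_one, hδ]

lemma strs_sub (f g : Module.End k (ExteriorAlgebra k V)) :
    strs k V (f - g) = strs k V f - strs k V g := by
  simp [strs, LinearMap.comp_sub]

lemma strs_smul (u : ℤˣ) (f : Module.End k (ExteriorAlgebra k V)) :
    strs k V (u • f) = u • strs k V f := by
  simp only [strs, Units.smul_def, LinearMap.comp_smul, map_zsmul]

lemma strs_comp_comm_of_isHomogeneousOfDegree {d : ℤ} {f : Module.End k (ExteriorAlgebra k V)}
    (hf : IsHomogeneousOfDegree k V d f) (g : Module.End k (ExteriorAlgebra k V)) :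
    strs k V (f ∘ₗ g) = d.negOnePow • strs k V (g ∘ₗ f) := by
  rw [strs, ← LinearMap.comp_assoc, eps_comp_of_isHomogeneousOfDegree hf, LinearMap.smul_comp,
    Units.smul_def, map_zsmul, LinearMap.comp_assoc, ← Module.End.mul_eq_comp f,
    LinearMap.trace_mul_comm, strs, Module.End.mul_eq_comp, LinearMap.comp_assoc, Units.smul_def]

lemma TrHom_apply (n : ℕ) (φ : Module.End k (ExteriorAlgebra k V)) (η : ⋀[k]^n V) :
    TrHom k V n φ η =
      (n : ℤ).negOnePow • strs k V (LinearMap.mulLeft k (η : ExteriorAlgebra k V) ∘ₗ φ) := by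
  rw [Units.smul_def, zsmul_eq_mul, Int.cast_negOnePow_natCast]
  rfl

lemma TrHom_supercommutator_apply (hδ : IsHomogeneousOfDegree k V j δ)
    (hδe : Even j → IsEvenDeriv k V δ) (hδo : Odd j → IsOddDeriv k V δ) (φ : Module.End k (ExteriorAlgebra k V)) {m n : ℕ}
    (hmn : (m : ℤ) + j = n) {x : ExteriorAlgebra k V} (hx : x ∈ ⋀[k]^m V)
    (hδx : δ x ∈ ⋀[k]^n V) :
    TrHom k V m (δ ∘ₗ φ - ((j * n).negOnePow : ℤ) • (φ ∘ₗ δ)) ⟨x, hx⟩ =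
      -(((j * n).negOnePow : ℤ) • TrHom k V n φ ⟨δ x, hδx⟩) := by
  rw [TrHom_apply, TrHom_apply, ← Units.smul_def, ← Units.smul_def]
  simp only [mulLeft_map_of_superderivation hδe hδo hx, LinearMap.sub_comp, LinearMap.smul_comp,
    LinearMap.comp_sub, LinearMap.comp_smul, LinearMap.comp_assoc, strs_sub, strs_smul,
    strs_comp_comm_of_isHomogeneousOfDegree hδ, smul_sub, smul_smul, neg_sub]
  -- the signs to match are `(-1)^m = (-1)^(jn + n + jm)` and `(-1)^(m + jn) = (-1)^(jn + n + j)`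
  congr 2 <;> simp only [← Int.negOnePow_add] <;> rw [Int.negOnePow_eq_iff, ← hmn]
  · rw [show (m : ℤ) - (j * (m + j) + (m + j + j * m)) = 2 * -(j * m) - j * (j + 1) by ring]
    exact (even_two_mul _).sub (Int.even_mul_succ_self j)
  · exact ⟨-j, by ring⟩

end

theorem generalized_supertrace_of_supercommutator_homogeneous
    (n : ℕ) (j : ℤ) (hjn : -(n : ℤ) + j ≤ 0)
    (φ δ : Module.End k (ExteriorAlgebra k V))
    (hδdeg : IsHomogeneousOfDegree k V j δ)
    (hδe : Even j → IsEvenDeriv k V δ) (hδo : Odd j → IsOddDeriv k V δ) :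
    iEmb k V ((n : ℤ) - j).toNat
        (TrHom k V ((n : ℤ) - j).toNat
          (δ ∘ₗ φ - ((j * (n : ℤ)).negOnePow : ℤ) • (φ ∘ₗ δ))) =
      δ ∘ₗ iEmb k V n (TrHom k V n φ) -
        ((j * (n : ℤ)).negOnePow : ℤ) • (iEmb k V n (TrHom k V n φ) ∘ₗ δ) := by
  have hmn : ((((n : ℤ) - j).toNat : ℕ) : ℤ) + j = n := by omega
  rw [comp_iEmb_eq_zero (map_one_of_superderivation hδe hδo), zero_sub]
  refine linearMap_ext_of_exteriorPower fun p x hx => ?_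
  simp only [iEmb, LinearMap.comp_apply, LinearMap.neg_apply, LinearMap.smul_apply]
  by_cases hp : p = ((n : ℤ) - j).toNat
  · subst hp
    have hδx : δ x ∈ ⋀[k]^n V := (hδdeg _ x hx).1 n hmn.symm
    rw [pr_apply_of_mem hx, pr_apply_of_mem hδx,
      TrHom_supercommutator_apply hδdeg hδe hδo φ hmn hx hδx, map_neg, map_zsmul]
  · rw [pr_apply_of_mem_of_ne hx hp, pr_map_of_isHomogeneousOfDegree_of_ne hδdeg hx (by omega)]
    simp
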